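/- For v ∈ H¹(U_θ) where U_θ = {(x,y): |arg(x+iy)| < θ}, extend v by zero to ℝ²; denote the extension Jv. Then Jv ∈ H¹(ℝ²∖Γ_θ) where Γ_θ = ∂U_θ, the jump of Jv along Γ_θ equals v|_{∂U_θ}, and the δ'-form satisfies h_θ(Jv,Jv) = ∫_{U_θ}|∇v|² dx dy − ∫_{∂U_θ}|v|² dσ, i.e. it equals the Robin form q¹_θ(v,v) with boundary parameter 1. -/

import Mathlib

open MeasureTheory Filter Set Real

/-- The boundary `Γ_θ = ∂U_θ = {(x,y) : x ≥ 0, |y| = x tan θ}`. -/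
def brokenLine (θ : ℝ) : Set (ℝ × ℝ) := {p | 0 ≤ p.1 ∧ |p.2| = p.1 * Real.tan θ}

/-- The sector `U_θ = {(x,y) : |arg(x+iy)| < θ}` (for `0 < θ < π/2`). -/
def sector (θ : ℝ) : Set (ℝ × ℝ) := {p | |p.2| < p.1 * Real.tan θ}

open Classical in
/-- The extension of `v` by zero outside `U_θ`. -/
noncomputable def zeroExt (θ : ℝ) (v : ℝ × ℝ → ℂ) : ℝ × ℝ → ℂ :=
  fun p => if p ∈ sector θ then v p else 0

/-- A unit normal to `Γ_θ`, pointing into `U_θ`. -/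
noncomputable def brokenNormal (θ : ℝ) (p : ℝ × ℝ) : ℝ × ℝ :=
  if 0 < p.2 then (Real.sin θ, -Real.cos θ) else (Real.sin θ, Real.cos θ)

/-- Integral over `Γ_θ = ∂U_θ` with respect to arclength, via unit-speed parametrization. -/
noncomputable def lineIntSq (θ : ℝ) (f : ℝ × ℝ → ℂ) : ℝ :=
  ∫ t in Set.Ioi (0 : ℝ),
    (‖f (t * Real.cos θ, t * Real.sin θ)‖ ^ 2 + ‖f (t * Real.cos θ, -(t * Real.sin θ))‖ ^ 2)

/-!
Off `Γ_θ` the extension `Jv` agrees near each point with `v` (in the open sector) or with `0`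
(in the open exterior), so it is differentiable there with derivative `1_{U_θ} ∇v`. As `Γ_θ` lies
on two lines it is Lebesgue-null, so the Dirichlet integral of `Jv` over `ℝ² ∖ Γ_θ` is that of `v`
over `U_θ`, and the two forms differ by the same boundary term. For the jump, `p + t n ∈ U_θ` and
`p - t n ∉ U_θ` for small `t > 0`, so the jump is `v (p + t n) → v p`.
-/

open Topology

def sectorExterior (θ : ℝ) : Set (ℝ × ℝ) := {p | p.1 * tan θ < |p.2|}

lemma isOpen_sector (θ : ℝ) : IsOpen (sector θ) :=
  isOpen_lt (by fun_prop) (by fun_prop)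

lemma isOpen_sectorExterior (θ : ℝ) : IsOpen (sectorExterior θ) :=
  isOpen_lt (by fun_prop) (by fun_prop)

lemma mem_sector_or_mem_sectorExterior {θ : ℝ} (htan : 0 < tan θ) {p : ℝ × ℝ}
    (hp : p ∉ brokenLine θ) : p ∈ sector θ ∨ p ∈ sectorExterior θ := by
  rcases lt_trichotomy |p.2| (p.1 * tan θ) with h | h | h
  · exact Or.inl h
  · refine absurd ⟨?_, h⟩ hp
    nlinarith [abs_nonneg p.2]
  · exact Or.inr h

lemma zeroExt_eq_indicator (θ : ℝ) (v : ℝ × ℝ → ℂ) : zeroExt θ v = (sector θ).indicator v :=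
  rfl

lemma zeroExt_eventuallyEq_of_mem_sector {θ : ℝ} (v : ℝ × ℝ → ℂ) {p : ℝ × ℝ}
    (hp : p ∈ sector θ) : zeroExt θ v =ᶠ[𝓝 p] v :=
  eventuallyEq_of_mem ((isOpen_sector θ).mem_nhds hp) fun _ hq => if_pos hq

lemma notMem_sector_of_mem_sectorExterior {θ : ℝ} {p : ℝ × ℝ} (hp : p ∈ sectorExterior θ) :
    p ∉ sector θ :=
  fun hs => lt_asymm (show p.1 * tan θ < |p.2| from hp) (show |p.2| < p.1 * tan θ from hs)

lemma zeroExt_eventuallyEq_zero_of_mem_sectorExterior {θ : ℝ} (v : ℝ × ℝ → ℂ) {p : ℝ × ℝ}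
    (hp : p ∈ sectorExterior θ) : zeroExt θ v =ᶠ[𝓝 p] 0 :=
  eventuallyEq_of_mem ((isOpen_sectorExterior θ).mem_nhds hp) fun _ hq =>
    if_neg (notMem_sector_of_mem_sectorExterior hq)

lemma hasFDerivAt_zeroExt {θ : ℝ} (htan : 0 < tan θ) {v : ℝ × ℝ → ℂ} (hv : Differentiable ℝ v)
    {p : ℝ × ℝ} (hp : p ∉ brokenLine θ) :
    HasFDerivAt (zeroExt θ v) (fderiv ℝ (zeroExt θ v) p) p := by
  refine DifferentiableAt.hasFDerivAt ?_
  rcases mem_sector_or_mem_sectorExterior htan hp with h | h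
  · exact (zeroExt_eventuallyEq_of_mem_sector v h).differentiableAt_iff.mpr (hv p)
  · exact (zeroExt_eventuallyEq_zero_of_mem_sectorExterior v h).differentiableAt_iff.mpr
      (differentiableAt_const 0)

lemma fderiv_zeroExt {θ : ℝ} (htan : 0 < tan θ) (v : ℝ × ℝ → ℂ) {p : ℝ × ℝ}
    (hp : p ∉ brokenLine θ) :
    fderiv ℝ (zeroExt θ v) p = (sector θ).indicator (fderiv ℝ v) p := by
  rcases mem_sector_or_mem_sectorExterior htan hp with h | h
  · rw [(zeroExt_eventuallyEq_of_mem_sector v h).fderiv_eq, indicator_of_mem h]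
  · rw [(zeroExt_eventuallyEq_zero_of_mem_sectorExterior v h).fderiv_eq,
      indicator_of_notMem (notMem_sector_of_mem_sectorExterior h)]
    exact fderiv_const_apply 0

lemma volume_setOf_snd_eq_mul_fst (a : ℝ) : volume {p : ℝ × ℝ | p.2 = a * p.1} = 0 := by
  let ℓ : ℝ × ℝ →ₗ[ℝ] ℝ := LinearMap.snd ℝ ℝ ℝ - a • LinearMap.fst ℝ ℝ ℝ
  have hker : {p : ℝ × ℝ | p.2 = a * p.1} = LinearMap.ker ℓ := by
    ext p
    simp [ℓ, sub_eq_zero]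
  rw [hker]
  refine Measure.addHaar_submodule _ _ fun htop => ?_
  have : ((0 : ℝ), (1 : ℝ)) ∈ LinearMap.ker ℓ := htop ▸ Submodule.mem_top
  simp [ℓ] at this

lemma volume_brokenLine (θ : ℝ) : volume (brokenLine θ) = 0 := by
  refine measure_mono_null ?_ (measure_union_null (volume_setOf_snd_eq_mul_fst (tan θ))
    (volume_setOf_snd_eq_mul_fst (-tan θ)))
  intro p ⟨_, hp⟩
  rcases abs_eq_abs.mp (hp.trans (abs_of_nonneg (hp ▸ abs_nonneg p.2)).symm) with h | h
  · exact Or.inl (show p.2 = tan θ * p.1 by rw [h, mul_comm])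
  · exact Or.inr (show p.2 = -tan θ * p.1 by rw [h, neg_mul, mul_comm])

lemma sin_pos_cos_pos_tan_pos {θ : ℝ} (hθ : θ ∈ Ioo 0 (π / 2)) :
    0 < sin θ ∧ 0 < cos θ ∧ 0 < tan θ :=
  ⟨sin_pos_of_pos_of_lt_pi hθ.1 (by linarith [hθ.2, pi_pos]),
    cos_pos_of_mem_Ioo ⟨by linarith [hθ.1, pi_pos], hθ.2⟩,
    tan_pos_of_pos_of_lt_pi_div_two hθ.1 hθ.2⟩

lemma fst_add_smul_brokenNormal (θ : ℝ) (p : ℝ × ℝ) (t : ℝ) :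
    (p + t • brokenNormal θ p).1 = p.1 + t * sin θ := by
  unfold brokenNormal
  split_ifs <;> rfl

lemma abs_snd_add_smul_brokenNormal (θ : ℝ) (p : ℝ × ℝ) (t : ℝ) :
    |(p + t • brokenNormal θ p).2| = |(|p.2| - t * cos θ)| := by
  by_cases hp : 0 < p.2
  · simp [brokenNormal, hp, abs_of_pos hp, sub_eq_add_neg]
  · simp only [brokenNormal, hp, if_false, Prod.snd_add, Prod.smul_mk, smul_eq_mul,
      abs_of_nonpos (not_lt.mp hp)]
    rw [← abs_neg]
    ring_nf

lemma add_smul_brokenNormal_mem_sector {θ : ℝ} (hθ : θ ∈ Ioo 0 (π / 2)) {p : ℝ × ℝ}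
    (hp : p ∈ brokenLine θ) {t : ℝ} (ht₀ : 0 < t) (ht : t * cos θ ≤ |p.2|) :
    p + t • brokenNormal θ p ∈ sector θ := by
  obtain ⟨hsin, hcos, htan⟩ := sin_pos_cos_pos_tan_pos hθ
  show |(p + t • brokenNormal θ p).2| < (p + t • brokenNormal θ p).1 * tan θ
  rw [abs_snd_add_smul_brokenNormal, abs_of_nonneg (sub_nonneg.mpr ht), hp.2,
    fst_add_smul_brokenNormal]
  nlinarith [mul_pos ht₀ hcos, mul_pos (mul_pos ht₀ hsin) htan]

lemma sub_smul_brokenNormal_notMem_sector {θ : ℝ} (hθ : θ ∈ Ioo 0 (π / 2)) {p : ℝ × ℝ}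
    (hp : p ∈ brokenLine θ) {t : ℝ} (ht₀ : 0 ≤ t) :
    p - t • brokenNormal θ p ∉ sector θ := by
  obtain ⟨hsin, hcos, htan⟩ := sin_pos_cos_pos_tan_pos hθ
  show ¬ |(p - t • brokenNormal θ p).2| < (p - t • brokenNormal θ p).1 * tan θ
  rw [sub_eq_add_neg, ← neg_smul, abs_snd_add_smul_brokenNormal, hp.2,
    fst_add_smul_brokenNormal, not_lt]
  nlinarith [le_abs_self (p.1 * tan θ - -t * cos θ), mul_nonneg ht₀ hcos.le,
    mul_nonneg (mul_nonneg ht₀ hsin.le) htan.le]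

lemma tendsto_jump_zeroExt {θ : ℝ} (hθ : θ ∈ Ioo 0 (π / 2)) {v : ℝ × ℝ → ℂ}
    (hv : Continuous v) {p : ℝ × ℝ} (hp : p ∈ brokenLine θ) (hp₀ : p ≠ 0) :
    Tendsto (fun t : ℝ =>
        zeroExt θ v (p + t • brokenNormal θ p) - zeroExt θ v (p - t • brokenNormal θ p))
      (𝓝[>] 0) (𝓝 (v p)) := by
  obtain ⟨-, hcos, htan⟩ := sin_pos_cos_pos_tan_pos hθ
  have hp₂ : 0 < |p.2| := by
    refine abs_pos.mpr fun h₂ => hp₀ (Prod.ext ?_ h₂)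
    have : p.1 * tan θ = 0 := by rw [← hp.2, h₂, abs_zero]
    exact (mul_eq_zero.mp this).resolve_right htan.ne'
  have hlim : Tendsto (fun t : ℝ => v (p + t • brokenNormal θ p)) (𝓝[>] 0) (𝓝 (v p)) := by
    have : Continuous fun t : ℝ => v (p + t • brokenNormal θ p) := hv.comp (by fun_prop)
    simpa using (this.tendsto 0).mono_left nhdsWithin_le_nhds
  refine hlim.congr' ?_
  filter_upwards [Ioo_mem_nhdsGT (div_pos hp₂ hcos)] with t ⟨ht₀, ht⟩
  rw [zeroExt_eq_indicator, indicator_of_mem (add_smul_brokenNormal_mem_sector hθ hp ht₀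
      ((lt_div_iff₀ hcos).mp ht).le),
    indicator_of_notMem (sub_smul_brokenNormal_notMem_sector hθ hp ht₀.le), sub_zero]

lemma integral_compl_brokenLine_norm_fderiv_zeroExt_sq {θ : ℝ} (htan : 0 < tan θ)
    (v : ℝ × ℝ → ℂ) :
    ∫ p in (brokenLine θ)ᶜ, ‖fderiv ℝ (zeroExt θ v) p‖ ^ 2
      = ∫ p in sector θ, ‖fderiv ℝ v p‖ ^ 2 := by
  have hae : ∀ᵐ p, p ∈ (brokenLine θ)ᶜ := measure_eq_zero_iff_ae_notMem.mp (volume_brokenLine θ)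
  rw [← integral_eq_setIntegral hae, ← integral_indicator (isOpen_sector θ).measurableSet]
  refine integral_congr_ae (hae.mono fun p hp => ?_)
  by_cases hs : p ∈ sector θ <;>
    simp [fderiv_zeroExt htan v hp, indicator_of_mem, indicator_of_notMem, hs]

theorem stmt_12_general (θ : ℝ) (hθ : θ ∈ Set.Ioo 0 (Real.pi / 2))
    (v : ℝ × ℝ → ℂ) (hv : ContDiff ℝ 1 v)
    -- v ∈ H¹(U_θ)
    (hvL2 : MemLp v 2 (volume.restrict (sector θ))) :
    -- Jv ∈ H¹(ℝ²∖Γ_θ)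
    (∀ p ∉ brokenLine θ, HasFDerivAt (zeroExt θ v) (fderiv ℝ (zeroExt θ v) p) p) ∧
    MemLp (zeroExt θ v) 2 (volume : Measure (ℝ × ℝ)) ∧
    -- the jump of Jv across Γ_θ equals v on ∂U_θ
    (∀ p ∈ brokenLine θ, p ≠ 0 →
      Tendsto (fun t : ℝ =>
          zeroExt θ v (p + t • brokenNormal θ p) - zeroExt θ v (p - t • brokenNormal θ p))
        (nhdsWithin 0 (Set.Ioi 0)) (nhds (v p))) ∧
    -- the δ'-form of Jv equals the Robin form q¹_θ of v
    (∫ p in (brokenLine θ)ᶜ, ‖fderiv ℝ (zeroExt θ v) p‖ ^ 2) - lineIntSq θ v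
      = (∫ p in sector θ, ‖fderiv ℝ v p‖ ^ 2) - lineIntSq θ v := by
  have htan : 0 < tan θ := (sin_pos_cos_pos_tan_pos hθ).2.2
  refine ⟨fun p hp => hasFDerivAt_zeroExt htan (hv.differentiable one_ne_zero) hp, ?_,
    fun p hp hp₀ => tendsto_jump_zeroExt hθ hv.continuous hp hp₀, ?_⟩
  · rw [zeroExt_eq_indicator]
    exact (memLp_indicator_iff_restrict (isOpen_sector θ).measurableSet).mpr hvL2
  · rw [integral_compl_brokenLine_norm_fderiv_zeroExt_sq htan v]

theorem stmt_12 (θ : ℝ) (hθ : θ ∈ Set.Ioo 0 (Real.pi / 2))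
    (v : ℝ × ℝ → ℂ) (hv : ContDiff ℝ 1 v)
    -- v ∈ H¹(U_θ)
    (hvL2 : MemLp v 2 (volume.restrict (sector θ)))
    (hgradL2 : MemLp (fun p => ‖fderiv ℝ v p‖) 2 (volume.restrict (sector θ))) :
    -- Jv ∈ H¹(ℝ²∖Γ_θ)
    (∀ p ∉ brokenLine θ, HasFDerivAt (zeroExt θ v) (fderiv ℝ (zeroExt θ v) p) p) ∧
    MemLp (zeroExt θ v) 2 (volume : Measure (ℝ × ℝ)) ∧
    -- the jump of Jv across Γ_θ equals v on ∂U_θ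
    (∀ p ∈ brokenLine θ, p ≠ 0 →
      Tendsto (fun t : ℝ =>
          zeroExt θ v (p + t • brokenNormal θ p) - zeroExt θ v (p - t • brokenNormal θ p))
        (nhdsWithin 0 (Set.Ioi 0)) (nhds (v p))) ∧
    -- the δ'-form of Jv equals the Robin form q¹_θ of v
    (∫ p in (brokenLine θ)ᶜ, ‖fderiv ℝ (zeroExt θ v) p‖ ^ 2) - lineIntSq θ v
      = (∫ p in sector θ, ‖fderiv ℝ v p‖ ^ 2) - lineIntSq θ v :=
  stmt_12_general θ hθ v hv hvL2
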